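/- Let C1, C3 ⊆ (0,1) be Borel sets of positive Lebesgue measure. Suppose that λ-almost every b ∈ (0, 1 − essinf(C1)) belongs to C3, and λ-almost every b ∈ (0, 1 − essinf(C3)) belongs to C1, where essinf(C) = inf{a > 0 : λ(C ∩ (0,a]) > 0}. Then λ((0,1) \ C1) = 0 and λ((0,1) \ C3) = 0. -/

import Mathlib

/-! Since `C1` has positive measure inside `(0,1)`, `essinf C1 < 1`, so `C3` is a.e. full on a
nonempty interval `(0, t)`; this forces `essinf C3 = 0`. Then `C1` is a.e. full on `(0,1)`, hence
`essinf C1 = 0` as well, and `C3` is a.e. full on `(0,1)`. -/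

open MeasureTheory Set

noncomputable def setEssInf (C : Set ℝ) : ℝ :=
  sInf {a : ℝ | 0 < a ∧ 0 < volume (C ∩ Ioc 0 a)}

lemma setEssInf_lt {C : Set ℝ} {b : ℝ} (hp : 0 < volume (C ∩ Ioo 0 b)) : setEssInf C < b := by
  by_contra! hb
  have hnull : ∀ a < b, volume (C ∩ Ioc 0 a) = 0 := by
    intro a hab
    by_contra hne
    rcases le_or_gt a 0 with ha | ha
    · simp [Ioc_eq_empty_of_le ha] at hne
    · have : setEssInf C ≤ a := csInf_le ⟨0, fun _ hx => hx.1.le⟩ ⟨ha, pos_iff_ne_zero.2 hne⟩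
      linarith
  obtain ⟨u, -, hub, hu⟩ := exists_seq_strictMono_tendsto b
  have hcover : C ∩ Ioo 0 b ⊆ ⋃ n, C ∩ Ioc 0 (u n) := by
    rintro x ⟨hxC, hx0, hxb⟩
    obtain ⟨n, hn⟩ := (hu.eventually (lt_mem_nhds hxb)).exists
    exact mem_iUnion.2 ⟨n, hxC, hx0, hn.le⟩
  exact hp.ne' (measure_mono_null hcover (measure_iUnion_null fun n => hnull _ (hub n)))

lemma setEssInf_eq_zero {C : Set ℝ} {t : ℝ} (ht : 0 < t) (h : volume (Ioo 0 t \ C) = 0) :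
    setEssInf C = 0 := by
  suffices hS : {a : ℝ | 0 < a ∧ 0 < volume (C ∩ Ioc 0 a)} = Ioi 0 from
    (congrArg sInf hS).trans csInf_Ioi
  refine Subset.antisymm (fun a ha => ha.1) fun ε hε => ⟨hε, ?_⟩
  have hae : Ioo 0 (min ε t) ≤ᵐ[volume] (C ∩ Ioc 0 ε : Set ℝ) := by
    rw [← inter_self (Ioo 0 (min ε t))]
    exact ((Ioo_subset_Ioo_right (min_le_right ε t)).eventuallyLE.trans (ae_le_set.2 h)).inter
      (Ioo_subset_Ioc_self.trans (Ioc_subset_Ioc_right (min_le_left ε t))).eventuallyLE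
  calc (0 : ENNReal) < volume (Ioo 0 (min ε t)) := by simpa using And.intro (mem_Ioi.1 hε) ht
    _ ≤ volume (C ∩ Ioc 0 ε) := measure_mono_ae hae

theorem stmt3_general (C1 C3 : Set ℝ) (hC1 : C1 ⊆ Ioo 0 1)
    (hp1 : 0 < volume C1)
    (h13 : volume (Ioo (0:ℝ) (1 - sInf {a : ℝ | 0 < a ∧ 0 < volume (C1 ∩ Ioc 0 a)}) \ C3) = 0)
    (h31 : volume (Ioo (0:ℝ) (1 - sInf {a : ℝ | 0 < a ∧ 0 < volume (C3 ∩ Ioc 0 a)}) \ C1) = 0) :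
    volume (Ioo (0:ℝ) 1 \ C1) = 0 ∧ volume (Ioo (0:ℝ) 1 \ C3) = 0 := by
  have hC1_lt : setEssInf C1 < 1 := setEssInf_lt (by rwa [inter_eq_self_of_subset_left hC1])
  have hC3_zero : setEssInf C3 = 0 := setEssInf_eq_zero (sub_pos.2 hC1_lt) h13
  have hC1_full : volume (Ioo (0:ℝ) 1 \ C1) = 0 := by
    rwa [← setEssInf, hC3_zero, sub_zero] at h31
  have hC1_zero : setEssInf C1 = 0 := setEssInf_eq_zero one_pos hC1_full
  exact ⟨hC1_full, by rwa [← setEssInf, hC1_zero, sub_zero] at h13⟩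

theorem stmt3 (C1 C3 : Set ℝ) (hC1 : C1 ⊆ Ioo 0 1) (hC3 : C3 ⊆ Ioo 0 1)
    (hm1 : MeasurableSet C1) (hm3 : MeasurableSet C3)
    (hp1 : 0 < volume C1) (hp3 : 0 < volume C3)
    (h13 : volume (Ioo (0:ℝ) (1 - sInf {a : ℝ | 0 < a ∧ 0 < volume (C1 ∩ Ioc 0 a)}) \ C3) = 0)
    (h31 : volume (Ioo (0:ℝ) (1 - sInf {a : ℝ | 0 < a ∧ 0 < volume (C3 ∩ Ioc 0 a)}) \ C1) = 0) :
    volume (Ioo (0:ℝ) 1 \ C1) = 0 ∧ volume (Ioo (0:ℝ) 1 \ C3) = 0 :=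
  stmt3_general C1 C3 hC1 hp1 h13 h31
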